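/- Let X be a real Banach space. If X contains a 𝔇-point, then the dual space X* contains a weak* super Δ-point. -/

import Mathlib

open NormedSpace Topology

/-- `x` is a 𝔇-point of the real Banach space `X`: `x` is in the unit sphere and every
slice of the unit ball determined by a norm-one functional attaining the value `1` at `x`
contains points almost at distance `2` from `x`. -/
def IsDPoint (X : Type*) [NormedAddCommGroup X] [NormedSpace ℝ X] (x : X) : Prop :=
  ‖x‖ = 1 ∧ ∀ f : StrongDual ℝ X, ‖f‖ = 1 → f x = 1 → ∀ ε : ℝ, 0 < ε →
    sSup ((fun y => ‖x - y‖) '' {y : X | ‖y‖ ≤ 1 ∧ 1 - ε < f y}) = 2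

/-- `g` is a weak* super Δ-point of the dual of `X`: `g` is in the dual unit sphere and
every relatively weak*-open subset of the dual unit ball containing `g` contains points
almost at distance `2` from `g`. -/
def IsWeakStarSuperDeltaPoint (X : Type*) [NormedAddCommGroup X] [NormedSpace ℝ X]
    (g : StrongDual ℝ X) : Prop :=
  ‖g‖ = 1 ∧ ∀ U : Set (WeakDual ℝ X), IsOpen U → StrongDual.toWeakDual g ∈ U →
    sSup ((fun h => ‖g - h‖) ''
      {h : StrongDual ℝ X | ‖h‖ ≤ 1 ∧ StrongDual.toWeakDual h ∈ U}) = 2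

/-!
Suppose no norming functional of the 𝔇-point `x` is a weak* super Δ-point. Each `g ∈ D(x)` then
has a weak*-neighbourhood whose trace on `B_{X*}` stays at distance `≤ 2 - ε_g` from `g`.
By weak*-compactness finitely many of these, centred at `g_1, …, g_n`, cover `D(x)` with a
common `ε`, and even cover a whole slab `{φ ∈ B_{X*} : φ x > 1 - δ}`. Now apply the 𝔇-property
to the average `f` of the `g_i`: it gives `y ∈ B_X` with `f y > 1 - σ` and `‖x - y‖ > 2 - σ`.
The first forces `g_i y > 1 - nσ` for every `i`; a functional `φ` norming `x - y` lies in the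
slab and has `φ y < σ - 1`, so `‖g_i - φ‖ > 2 - (n + 1)σ` for the `g_i` whose neighbourhood
contains `φ`, contradicting the cover once `σ` is small.
-/

theorem Finset.exists_pos_forall_le {ι : Type*} (s : Finset ι) {ε : ι → ℝ}
    (hε : ∀ i ∈ s, 0 < ε i) : ∃ ε₀ > 0, ∀ i ∈ s, ε₀ ≤ ε i := by
  rcases s.eq_empty_or_nonempty with rfl | hs
  · exact ⟨1, one_pos, by simp⟩
  · obtain ⟨j, hj, hmin⟩ := s.exists_min_image ε hs
    exact ⟨ε j, hε j hj, hmin⟩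

theorem IsCompact.exists_lt_forall_mem_of_lt {α : Type*} [TopologicalSpace α] {K V : Set α}
    {f : α → ℝ} {c : ℝ} (hK : IsCompact K) (hV : IsOpen V) (hf : ContinuousOn f K)
    (hlt : ∀ a ∈ K, a ∉ V → f a < c) : ∃ c' < c, ∀ a ∈ K, c' < f a → a ∈ V := by
  rcases (K \ V).eq_empty_or_nonempty with hE | hE
  · refine ⟨c - 1, by linarith, fun a ha _ => ?_⟩
    by_contra haV
    exact hE.subset ⟨ha, haV⟩
  · obtain ⟨b, ⟨hbK, hbV⟩, hmax⟩ := (hK.diff hV).exists_isMaxOn hE (hf.mono Set.sdiff_subset)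
    refine ⟨f b, hlt b hbK hbV, fun a ha hba => ?_⟩
    by_contra haV
    exact (isMaxOn_iff.1 hmax a ⟨ha, haV⟩).not_gt hba

section

variable {X : Type*} [NormedAddCommGroup X] [NormedSpace ℝ X]

theorem apply_le_one_of_norm_le_one {g : StrongDual ℝ X} {y : X} (hg : ‖g‖ ≤ 1)
    (hy : ‖y‖ ≤ 1) : g y ≤ 1 :=
  calc g y ≤ ‖g‖ * ‖y‖ := (Real.le_norm_self _).trans (g.le_opNorm y)
    _ ≤ 1 := mul_le_one₀ hg (norm_nonneg _) hy

theorem norm_eq_one_of_apply_eq_one {g : StrongDual ℝ X} {x : X} (hg : ‖g‖ ≤ 1)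
    (hx : ‖x‖ ≤ 1) (hgx : g x = 1) : ‖g‖ = 1 := by
  refine le_antisymm hg ?_
  calc 1 = g x := hgx.symm
    _ ≤ ‖g‖ * ‖x‖ := (Real.le_norm_self _).trans (g.le_opNorm x)
    _ ≤ ‖g‖ := mul_le_of_le_one_right (norm_nonneg _) hx

theorem IsDPoint.exists_mem_slice_two_sub_lt_norm_sub {x : X} (hx : IsDPoint X x)
    {f : StrongDual ℝ X} (hf : ‖f‖ = 1) (hfx : f x = 1) {σ : ℝ} (hσ : 0 < σ) :
    ∃ y : X, ‖y‖ ≤ 1 ∧ 1 - σ < f y ∧ 2 - σ < ‖x - y‖ := by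
  set S := (fun y => ‖x - y‖) '' {y : X | ‖y‖ ≤ 1 ∧ 1 - σ < f y}
  have hsup : sSup S = 2 := hx.2 f hf hfx σ hσ
  have hS : S.Nonempty := by
    by_contra hS
    rw [Set.not_nonempty_iff_eq_empty.1 hS, Real.sSup_empty] at hsup
    norm_num at hsup
  obtain ⟨_, ⟨y, ⟨hy, hfy⟩, rfl⟩, hxy⟩ := exists_lt_of_lt_csSup hS (by linarith : 2 - σ < sSup S)
  exact ⟨y, hy, hfy, hxy⟩

theorem exists_norm_le_one_apply_gt_apply_lt_of_two_sub_lt_norm_sub {x y : X} (hx : ‖x‖ ≤ 1)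
    (hy : ‖y‖ ≤ 1) {σ : ℝ} (hxy : 2 - σ < ‖x - y‖) :
    ∃ φ : StrongDual ℝ X, ‖φ‖ ≤ 1 ∧ 1 - σ < φ x ∧ φ y < σ - 1 := by
  obtain ⟨φ, hφ, hφxy⟩ := exists_dual_vector'' ℝ (x - y)
  have hφx := apply_le_one_of_norm_le_one hφ hx
  have hφy := apply_le_one_of_norm_le_one hφ (y := -y) (by rwa [norm_neg])
  simp only [map_sub, map_neg, RCLike.ofReal_real_eq_id, id] at hφxy hφy
  exact ⟨φ, hφ, by linarith, by linarith⟩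

theorem exists_isOpen_forall_norm_sub_le_two_sub {g : StrongDual ℝ X} (hg : ‖g‖ = 1)
    (hnot : ¬ IsWeakStarSuperDeltaPoint X g) :
    ∃ U : Set (WeakDual ℝ X), IsOpen U ∧ StrongDual.toWeakDual g ∈ U ∧ ∃ ε > 0,
      ∀ h : StrongDual ℝ X, ‖h‖ ≤ 1 → StrongDual.toWeakDual h ∈ U → ‖g - h‖ ≤ 2 - ε := by
  simp only [IsWeakStarSuperDeltaPoint, hg, true_and, not_forall] at hnot
  obtain ⟨U, hU, hgU, hsup⟩ := hnot
  set A := (fun h => ‖g - h‖) '' {h : StrongDual ℝ X | ‖h‖ ≤ 1 ∧ StrongDual.toWeakDual h ∈ U}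
  have hA : A.Nonempty := ⟨_, g, ⟨hg.le, hgU⟩, rfl⟩
  have hA2 : ∀ a ∈ A, a ≤ 2 := by
    rintro _ ⟨h, ⟨hh, -⟩, rfl⟩
    linarith [norm_sub_le g h]
  refine ⟨U, hU, hgU, 2 - sSup A, by linarith [(csSup_le hA hA2).lt_of_ne hsup],
    fun h hh hhU => ?_⟩
  linarith [le_csSup ⟨2, hA2⟩ ⟨h, ⟨hh, hhU⟩, rfl⟩]

theorem exists_finset_forall_norm_sub_le_two_sub {x : X} (hx : ‖x‖ ≤ 1)
    (hD : ∀ g : StrongDual ℝ X, ‖g‖ = 1 → g x = 1 → ¬ IsWeakStarSuperDeltaPoint X g) :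
    ∃ t : Finset (StrongDual ℝ X), (∀ g ∈ t, ‖g‖ ≤ 1 ∧ g x = 1) ∧ ∃ ε > 0, ∃ δ > 0,
      ∀ φ : StrongDual ℝ X, ‖φ‖ ≤ 1 → 1 - δ < φ x → ∃ g ∈ t, ‖g - φ‖ ≤ 2 - ε := by
  classical
  set B : Set (WeakDual ℝ X) := WeakDual.toStrongDual ⁻¹' Metric.closedBall 0 1
  have hB : IsCompact B := WeakDual.isCompact_closedBall 0 1
  have mem_B : ∀ φ, φ ∈ B ↔ ‖WeakDual.toStrongDual φ‖ ≤ 1 := fun _ => mem_closedBall_zero_iff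
  set D := B ∩ {φ | φ x = 1}
  have hDc : IsCompact D :=
    hB.inter_right (isClosed_eq (WeakDual.eval_continuous x) continuous_const)
  have hnhds : ∀ φ ∈ D, ∃ U : Set (WeakDual ℝ X), ∃ ε : ℝ, IsOpen U ∧ φ ∈ U ∧ 0 < ε ∧
      ∀ h : StrongDual ℝ X, ‖h‖ ≤ 1 → StrongDual.toWeakDual h ∈ U →
        ‖WeakDual.toStrongDual φ - h‖ ≤ 2 - ε := by
    rintro φ ⟨hφ, hφx⟩
    have hφ1 := norm_eq_one_of_apply_eq_one ((mem_B φ).1 hφ) hx hφx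
    obtain ⟨U, hU, hφU, ε, hε, hgap⟩ := exists_isOpen_forall_norm_sub_le_two_sub hφ1 (hD _ hφ1 hφx)
    exact ⟨U, ε, hU, hφU, hε, hgap⟩
  choose! U ε hU hφU hε hgap using hnhds
  obtain ⟨s, hsD, hDs⟩ := hDc.elim_nhds_subcover U fun φ hφ => (hU φ hφ).mem_nhds (hφU φ hφ)
  obtain ⟨ε₀, hε₀, hε₀s⟩ := s.exists_pos_forall_le fun φ hφ => hε φ (hsD φ hφ)
  obtain ⟨c, hc, hslab⟩ := hB.exists_lt_forall_mem_of_lt (f := fun φ => φ x)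
    (isOpen_biUnion fun φ hφ => hU φ (hsD φ hφ)) (WeakDual.eval_continuous x).continuousOn
    fun φ hφ hφV => (apply_le_one_of_norm_le_one ((mem_B φ).1 hφ) hx).lt_of_ne
      fun hφx => hφV (hDs ⟨hφ, hφx⟩)
  refine ⟨s.image WeakDual.toStrongDual, ?_, ε₀, hε₀, 1 - c, by linarith, fun φ hφ hφx => ?_⟩
  · simp only [Finset.mem_image, forall_exists_index, and_imp]
    rintro _ ψ hψ rfl
    exact (hsD ψ hψ).imp (mem_B ψ).1 id
  · obtain ⟨ψ, hψ, hφψ⟩ :=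
      Set.mem_iUnion₂.1 (hslab (StrongDual.toWeakDual φ) ((mem_B _).2 hφ) (by simpa using hφx))
    exact ⟨_, Finset.mem_image_of_mem _ hψ,
      (hgap ψ (hsD ψ hψ) φ hφ hφψ).trans (by linarith [hε₀s ψ hψ])⟩

theorem exists_norm_eq_one_forall_one_sub_card_mul_lt_apply {x : X} (hx : ‖x‖ ≤ 1)
    {t : Finset (StrongDual ℝ X)} (hne : t.Nonempty) (ht : ∀ g ∈ t, ‖g‖ ≤ 1 ∧ g x = 1) :
    ∃ f : StrongDual ℝ X, ‖f‖ = 1 ∧ f x = 1 ∧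
      ∀ y : X, ‖y‖ ≤ 1 → ∀ σ : ℝ, 1 - σ < f y → ∀ g ∈ t, 1 - t.card * σ < g y := by
  have hcard : (0 : ℝ) < t.card := by exact_mod_cast hne.card_pos
  set f : StrongDual ℝ X := (t.card : ℝ)⁻¹ • ∑ g ∈ t, g
  have hf : ∀ y, t.card * f y = ∑ g ∈ t, g y := fun y => by simp [f, hcard.ne']
  have hfx : f x = 1 := by
    have := hf x
    rw [Finset.sum_congr rfl fun g hg => (ht g hg).2, Finset.sum_const, nsmul_one] at this
    exact (mul_eq_left₀ hcard.ne').1 this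
  have hfn : ‖f‖ ≤ 1 := by
    calc ‖f‖ ≤ ‖(t.card : ℝ)⁻¹‖ * ∑ g ∈ t, ‖g‖ :=
          (norm_smul_le _ (∑ g ∈ t, g)).trans (by gcongr; exact norm_sum_le _ _)
      _ ≤ (t.card : ℝ)⁻¹ * t.card := by
          rw [Real.norm_of_nonneg (by positivity)]
          gcongr
          simpa using Finset.sum_le_card_nsmul t _ 1 fun g hg => (ht g hg).1
      _ = 1 := inv_mul_cancel₀ hcard.ne'
  refine ⟨f, norm_eq_one_of_apply_eq_one hfn hx hfx, hfx, fun y hy σ hfy g hg => ?_⟩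
  have hsingle : 1 - g y ≤ ∑ h ∈ t, (1 - h y) :=
    Finset.single_le_sum (f := fun h => 1 - h y)
      (fun h hh => sub_nonneg.2 (apply_le_one_of_norm_le_one (ht h hh).1 hy)) hg
  rw [Finset.sum_sub_distrib, Finset.sum_const, nsmul_one, ← hf] at hsingle
  nlinarith

theorem IsDPoint.not_forall_exists_norm_sub_le_two_sub {x : X} (hx : IsDPoint X x)
    {t : Finset (StrongDual ℝ X)} (ht : ∀ g ∈ t, ‖g‖ ≤ 1 ∧ g x = 1) {ε δ : ℝ} (hε : 0 < ε)
    (hδ : 0 < δ) :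
    ¬ ∀ φ : StrongDual ℝ X, ‖φ‖ ≤ 1 → 1 - δ < φ x → ∃ g ∈ t, ‖g - φ‖ ≤ 2 - ε := by
  intro hcover
  obtain ⟨g₀, hg₀, hg₀x⟩ := exists_dual_vector'' ℝ x
  obtain ⟨g₁, hg₁, -⟩ := hcover g₀ hg₀ (by simp [hg₀x, hx.1, hδ])
  obtain ⟨f, hf, hfx, hft⟩ :=
    exists_norm_eq_one_forall_one_sub_card_mul_lt_apply hx.1.le ⟨g₁, hg₁⟩ ht
  set σ := min (ε / (t.card + 1)) δ
  have hσ : 0 < σ := by positivity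
  have hσε : (t.card + 1) * σ ≤ ε := by
    rw [← le_div_iff₀' (by positivity)]
    exact min_le_left _ _
  obtain ⟨y, hy, hfy, hxy⟩ := hx.exists_mem_slice_two_sub_lt_norm_sub hf hfx hσ
  obtain ⟨φ, hφ, hφx, hφy⟩ :=
    exists_norm_le_one_apply_gt_apply_lt_of_two_sub_lt_norm_sub hx.1.le hy hxy
  obtain ⟨g, hg, hgφ⟩ := hcover φ hφ (by linarith [min_le_right (ε / (t.card + 1)) δ])
  have hgy := hft y hy σ hfy g hg
  have hgφy : g y - φ y ≤ ‖g - φ‖ :=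
    (Real.le_norm_self _).trans (((g - φ).le_opNorm y).trans
      (mul_le_of_le_one_right (norm_nonneg _) hy))
  linarith

end

theorem dPoint_implies_weakStarSuperDeltaPoint
    (X : Type*) [NormedAddCommGroup X] [NormedSpace ℝ X]
    (h : ∃ x : X, IsDPoint X x) :
    ∃ g : StrongDual ℝ X, IsWeakStarSuperDeltaPoint X g := by
  obtain ⟨x, hx⟩ := h
  by_contra! hnone
  obtain ⟨t, ht, ε, hε, δ, hδ, hcover⟩ :=
    exists_finset_forall_norm_sub_le_two_sub hx.1.le fun g _ _ => hnone g
  exact hx.not_forall_exists_norm_sub_le_two_sub ht hε hδ hcover
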